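/- arXiv:2012.05664 — 3 statements merged into one kernel-verified Lean document; each statement's English description precedes it below -/
import Mathlib

section
/- Let n ≥ 2, q ∈ ℂ with 0 < |q| < 1 and t ∈ ℂ*, and for λ ∈ ℤ^n define the polynomial d_λ(u) = ∏_{j=1}^n (1 − u t^{n−j} q^{λ_j}) ∈ ℂ[u]. Then the polynomials d_λ(u) separate ℤ^n (i.e., d_λ(u) ≠ d_μ(u) as polynomials in u for every distinct pair λ, μ ∈ ℤ^n) if and only if t^k ∉ q^ℤ for k = 1,…,n−1. -/
open scoped BigOperators Classical
open MeasureTheory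

noncomputable section

/-- The infinite `p`-Pochhammer symbol `(z;p)_∞ = ∏_{i≥0} (1 - p^i z)`. -/
def qPochInf (z p : ℂ) : ℂ := ∏' i : ℕ, (1 - p ^ i * z)

/-- The finite `q`-Pochhammer symbol `(a;q)_k`. -/
def qPochFin (a q : ℂ) (k : ℕ) : ℂ := ∏ i ∈ Finset.range k, (1 - q ^ i * a)

/-- The theta function `θ(z;p) = (z;p)_∞ (p/z;p)_∞`. -/
def thetaF (z p : ℂ) : ℂ := qPochInf z p * qPochInf (p / z) p

/-- The double Pochhammer symbol `(z;p,q)_∞`. -/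
def qPochInf2 (z p q : ℂ) : ℂ := ∏' ij : ℕ × ℕ, (1 - p ^ ij.1 * q ^ ij.2 * z)

/-- The Ruijsenaars elliptic gamma function `Γ(z;p,q)`. -/
def ellGamma (z p q : ℂ) : ℂ := qPochInf2 (p * q / z) p q / qPochInf2 z p q

/-- `q`-shift of the variables in positions `I`. -/
def qShift {n : ℕ} (q : ℂ) (I : Finset (Fin n)) (x : Fin n → ℂ) : Fin n → ℂ :=
  fun i => if i ∈ I then q * x i else x i

/-- The elliptic Ruijsenaars `q`-difference operator of order `r`, applied to a function. -/
def ellD {n : ℕ} (p q t : ℂ) (r : ℕ) (f : (Fin n → ℂ) → ℂ) (x : Fin n → ℂ) : ℂ :=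
  t ^ r.choose 2 * ∑ I ∈ Finset.powersetCard r Finset.univ,
    (∏ i ∈ I, ∏ j ∈ Iᶜ, thetaF (t * x i / x j) p / thetaF (x i / x j) p) * f (qShift q I x)

/-- Generating series `D_x(p;u) = Σ_{r=0}^n (-u)^r D^{(r)}_x(p)`. -/
def ellDgen {n : ℕ} (p q t u : ℂ) (f : (Fin n → ℂ) → ℂ) (x : Fin n → ℂ) : ℂ :=
  ∑ r ∈ Finset.range (n + 1), (-u) ^ r * ellD p q t r f x

/-- The coefficient `B_I(x;p)` of the modified elliptic Ruijsenaars operators. -/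
def Bcoef {n : ℕ} (p t : ℂ) (I : Finset (Fin n)) (x : Fin n → ℂ) : ℂ :=
  (∏ i ∈ I, ∏ j ∈ Iᶜ, if i < j then thetaF (x j / (t * x i)) p / thetaF (x j / x i) p else 1) *
    (∏ j ∈ I, ∏ i ∈ Iᶜ, if i < j then thetaF (t * x j / x i) p / thetaF (x j / x i) p else 1)

/-- The modified elliptic Ruijsenaars operator `E^{(r)}_{x,s}(p)`, applied to a function. -/
def modE {n : ℕ} (p q t : ℂ) (s : Fin n → ℂ) (r : ℕ) (f : (Fin n → ℂ) → ℂ)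
    (x : Fin n → ℂ) : ℂ :=
  ∑ I ∈ Finset.powersetCard r Finset.univ,
    (∏ i ∈ I, s i) * Bcoef p t I x * f (qShift q I x)

/-- The elementary symmetric polynomial `e_r(s)`. -/
def esymF {n : ℕ} (s : Fin n → ℂ) (r : ℕ) : ℂ :=
  ∑ I ∈ Finset.powersetCard r Finset.univ, ∏ i ∈ I, s i

/-- Laurent polynomials in `n` variables, as finitely supported coefficient functions. -/
abbrev LPoly (n : ℕ) := (Fin n → ℤ) →₀ ℂ

/-- Evaluation of a Laurent polynomial at a point of `(ℂ*)^n`. -/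
def evalL {n : ℕ} (f : LPoly n) (x : Fin n → ℂ) : ℂ :=
  ∑ μ ∈ f.support, f μ * ∏ i, x i ^ μ i

/-- Symmetric Laurent polynomials. -/
def SymmL {n : ℕ} (f : LPoly n) : Prop :=
  ∀ σ : Equiv.Perm (Fin n), ∀ μ : Fin n → ℤ, f (μ ∘ σ) = f μ

/-- The permutation action on Laurent polynomials. -/
def permL {n : ℕ} (σ : Equiv.Perm (Fin n)) (f : LPoly n) : LPoly n :=
  Finsupp.equivMapDomain (Equiv.arrowCongr σ (Equiv.refl ℤ)) f

/-- Dominant vectors `λ_1 ≥ λ_2 ≥ ⋯ ≥ λ_n`. -/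
def DomVec {n : ℕ} (μ : Fin n → ℤ) : Prop := ∀ i j : Fin n, i ≤ j → μ j ≤ μ i

/-- The dominance order on `ℤ^n`. -/
def domLE {n : ℕ} (μ ν : Fin n → ℤ) : Prop :=
  (∑ i, μ i = ∑ i, ν i) ∧
    ∀ k : Fin n, ∑ i ∈ Finset.univ.filter (fun i => i ≤ k), μ i ≤
      ∑ i ∈ Finset.univ.filter (fun i => i ≤ k), ν i

/-- Membership in `ℂ[x^{±1}]^{S_n}_{≤ λ}`: the span of the monomial symmetric
functions `m_μ` over dominant `μ ≤ λ`. -/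
def InBelow {n : ℕ} (f : LPoly n) (lam : Fin n → ℤ) : Prop :=
  SymmL f ∧ ∀ ν ∈ f.support, ∃ μ : Fin n → ℤ,
    DomVec μ ∧ (∃ σ : Equiv.Perm (Fin n), ν = μ ∘ σ) ∧ domLE μ lam

/-- The spectral vector `t^ρ q^λ = (t^{n-1} q^{λ_1}, …, q^{λ_n})`. -/
def specVec {n : ℕ} (q t : ℂ) (lam : Fin n → ℤ) : Fin n → ℂ :=
  fun i => t ^ (n - 1 - (i : ℕ)) * q ^ lam i

/-- Characterization of the Macdonald Laurent polynomial attached to a dominant vector. -/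
def IsMacdonald {n : ℕ} (q t : ℂ) (lam : Fin n → ℤ) (P : LPoly n) : Prop :=
  InBelow P lam ∧ P lam = 1 ∧
    ∀ r ∈ Finset.Icc 1 n, ∀ x : Fin n → ℂ, (∀ i, x i ≠ 0) →
      (∀ i j : Fin n, i ≠ j → x i ≠ x j) →
      ellD 0 q t r (evalL P) x = esymF (specVec q t lam) r * evalL P x

/-- Domain of validity of the `p`-expansion of the elliptic Ruijsenaars operators:
`|p|^{1/(n-1)} < |x_{i+1}/x_i| < 1` (here in `n+1` variables). -/
def ExpDomain {n : ℕ} (p : ℂ) (x : Fin (n + 1) → ℂ) : Prop :=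
  (∀ i, x i ≠ 0) ∧ ∀ i : Fin n,
    ‖p‖ < ‖x i.succ / x i.castSucc‖ ^ n ∧
      ‖x i.succ / x i.castSucc‖ < 1

/-- The vector `φ = (1,0,…,0,-1)`. -/
def phiVec (n : ℕ) : Fin (n + 1) → ℤ :=
  fun i => (if i = 0 then 1 else 0) - (if i = Fin.last n then 1 else 0)

/-- The exponent vector of `x^{-δ} = p`, i.e. `(1,1,…,1)`. -/
def oneF (n : ℕ) : Fin (n + 1) →₀ ℕ := Finsupp.equivFunOnFinite.symm 1

/-- The pairing `⟨ε_j, ν⟩` for `ν ∈ Q^af_+` (cyclic convention). -/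
def pairEpsF {n : ℕ} (ν : Fin (n + 1) → ℕ) (j : Fin (n + 1)) : ℤ :=
  (ν (j + 1) : ℤ) - (ν j : ℤ)

/-- The quantity `d(ν) = Σ_j max(⟨ε_j,ν⟩,0)`. -/
def dIndF {n : ℕ} (ν : Fin (n + 1) → ℕ) : ℕ := ∑ j, (pairEpsF ν j).toNat

/-- The coordinates `z_0 = p x_1/x_n`, `z_k = x_{k+1}/x_k`. -/
def zOf (n : ℕ) (p : ℂ) (x : Fin (n + 1) → ℂ) : Fin (n + 1) → ℂ :=
  fun k => if k = 0 then p * x 0 / x (Fin.last n) else x k / x (k - 1)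

/-- The ratio `x_j/x_i` (for `i < j`) expressed in the `z` coordinates. -/
def ratZ {n : ℕ} (z : Fin (n + 1) → ℂ) (i j : Fin (n + 1)) : ℂ :=
  ∏ k ∈ Finset.Ioc i j, z k

/-- The coefficient `B_I` written as a function of the `z` coordinates
(with `p = z_0 z_1 ⋯ z_{n-1}`). -/
def BcoefZ {n : ℕ} (t : ℂ) (I : Finset (Fin (n + 1))) (z : Fin (n + 1) → ℂ) : ℂ :=
  (∏ i ∈ I, ∏ j ∈ Iᶜ, if i < j then
      thetaF (ratZ z i j / t) (∏ k, z k) / thetaF (ratZ z i j) (∏ k, z k) else 1) *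
    (∏ j ∈ I, ∏ i ∈ Iᶜ, if i < j then
      thetaF (t * ratZ z i j) (∏ k, z k) / thetaF (ratZ z i j) (∏ k, z k) else 1)

/-- The symbol `b_β(q^{-ν})` of the modified elliptic Ruijsenaars operator of order `r`. -/
def bEval {n : ℕ} (q : ℂ) (s : Fin (n + 1) → ℂ)
    (b : Finset (Fin (n + 1)) → ((Fin (n + 1) →₀ ℕ) → ℂ)) (r : ℕ)
    (β ν : Fin (n + 1) →₀ ℕ) : ℂ :=
  ∑ I ∈ Finset.powersetCard r Finset.univ,
    b I β * ∏ i ∈ I, s i * q ^ (-pairEpsF (⇑ν) i)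

/-- The formal joint eigenvalue equations, coefficientwise in
`ℂ[[p x_1/x_n, x_2/x_1, …, x_n/x_{n-1}]]`. -/
def FormalEigen {n : ℕ} (q : ℂ) (s : Fin (n + 1) → ℂ)
    (b : Finset (Fin (n + 1)) → ((Fin (n + 1) →₀ ℕ) → ℂ))
    (f : (Fin (n + 1) →₀ ℕ) → ℂ) (ε : ℕ → ℕ → ℂ) : Prop :=
  ∀ r ∈ Finset.Icc 1 (n + 1), ∀ μ : Fin (n + 1) →₀ ℕ,
    ∑ bv ∈ Finset.HasAntidiagonal.antidiagonal μ, bEval q s b r bv.1 bv.2 * f bv.2 =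
      ∑ k ∈ Finset.range (μ 0 + 1),
        if k • oneF n ≤ μ then ε r k * f (μ - k • oneF n) else 0

/-- Contour integral over the `n`-cycle `{|y_i| = rad i}`, against the
normalized measure `dω_n(y)`. -/
def cycleIntegral {n : ℕ} (rad : Fin n → ℝ) (g : (Fin n → ℂ) → ℂ) : ℂ :=
  ∫ θ in (Set.univ.pi fun _ : Fin n => Set.Icc (0 : ℝ) 1),
    g fun i => (rad i : ℂ) * Complex.exp (2 * Real.pi * Complex.I * (θ i : ℂ))

/-- Normalized integral over the unit torus `𝕋^n`. -/
def torusInt (n : ℕ) (g : (Fin n → ℂ) → ℂ) : ℂ := cycleIntegral (fun _ => 1) g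

/-- The symmetric weight function `w^sym(x;p)`. -/
def wsymF {n : ℕ} (p q t : ℂ) (x : Fin n → ℂ) : ℂ :=
  ∏ i, ∏ j, if i < j then
    ellGamma (t * x i / x j) p q * ellGamma (t * x j / x i) p q /
      (ellGamma (x i / x j) p q * ellGamma (x j / x i) p q) else 1

/-- The trigonometric Cauchy kernel `K(x,y)`. -/
def cauchyK {n : ℕ} (q t : ℂ) (x y : Fin n → ℂ) : ℂ :=
  ∏ i, ∏ j, qPochInf (t * x i / y j) q / qPochInf (x i / y j) q

/-- The trigonometric weight function `w(y)`. -/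
def wTrig {n : ℕ} (q t : ℂ) (y : Fin n → ℂ) : ℂ :=
  ∏ i, ∏ j, if i < j then
    (1 - y j / y i) * qPochInf (q * y j / (t * y i)) q / qPochInf (t * y j / y i) q else 1

/-- The elliptic Cauchy kernel `K(x,y;p)`. -/
def cauchyKell {n : ℕ} (p q t : ℂ) (x y : Fin n → ℂ) : ℂ :=
  ∏ i, ∏ j, ellGamma (x i / y j) p q / ellGamma (t * x i / y j) p q

/-- The elliptic weight function `w(y;p)`. -/
def wEll {n : ℕ} (p q t : ℂ) (y : Fin n → ℂ) : ℂ :=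
  ∏ i, ∏ j, if i < j then
    thetaF (y j / y i) p * ellGamma (t * y j / y i) p q /
      ellGamma (q * y j / (t * y i)) p q else 1

/-- `λ_{j+1}` with the convention `λ_{n+1} = 0`. -/
def lamNext {n : ℕ} (lam : Fin (n + 1) → ℕ) (j : Fin (n + 1)) : ℕ :=
  if h : (j : ℕ) + 1 < n + 1 then lam ⟨(j : ℕ) + 1, h⟩ else 0

/-- The constant `b_λ` in the Cauchy expansion. -/
def bLamC {n : ℕ} (q t : ℂ) (lam : Fin (n + 1) → ℕ) : ℂ :=
  ∏ i : Fin (n + 1), ∏ j : Fin (n + 1), if i ≤ j then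
    qPochFin (t ^ ((j : ℕ) - (i : ℕ) + 1) * q ^ ((lam i : ℤ) - (lam j : ℤ))) q
        (lam j - lamNext lam j) /
      qPochFin (t ^ ((j : ℕ) - (i : ℕ)) * q ^ ((lam i : ℤ) - (lam j : ℤ) + 1)) q
        (lam j - lamNext lam j)
  else 1

/-- The coefficient `𝒜_I(x;p)` of the generating series of elliptic Ruijsenaars
operators, in the form `t^{binom(|I|,2)} ∏_{i∈I,j∉I} θ(t x_i/x_j;p)/θ(x_i/x_j;p)`. -/
def AcoefD {n : ℕ} (p t : ℂ) (I : Finset (Fin n)) (x : Fin n → ℂ) : ℂ :=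
  t ^ (I.card.choose 2) *
    ∏ i ∈ I, ∏ j ∈ Iᶜ, thetaF (t * x i / x j) p / thetaF (x i / x j) p

/-- The coefficient `𝒜_I(x;p) = t^{⟨ε_I,ρ⟩} B_I(x;p)`. -/
def AcoefB {n : ℕ} (p t : ℂ) (I : Finset (Fin n)) (x : Fin n → ℂ) : ℂ :=
  (∏ i ∈ I, t ^ (n - 1 - (i : ℕ))) * Bcoef p t I x

/-- The gamma-factor `∏_{i<j} Γ(t x_j/x_i;p,q)/Γ(q x_j/(t x_i);p,q)` in `z` coordinates. -/
def Gfac {n : ℕ} (q t : ℂ) (z : Fin (n + 1) → ℂ) : ℂ :=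
  ∏ i, ∏ j, if i < j then
    ellGamma (t * ratZ z i j) (∏ k, z k) q / ellGamma (q * ratZ z i j / t) (∏ k, z k) q
  else 1

/-- The polynomial `d_λ(u) = ∏_{j=1}^n (1 - u t^{n-j} q^{λ_j})`. -/
def dPoly {n : ℕ} (q t : ℂ) (lam : Fin n → ℤ) : Polynomial ℂ :=
  ∏ j : Fin n, (1 - Polynomial.C (specVec q t lam j) * Polynomial.X)

/-- Rotation of affine exponents: `(rotF ν) j = ν (j+1)`. -/
def rotF {n : ℕ} (ν : Fin (n + 1) →₀ ℕ) : Fin (n + 1) →₀ ℕ :=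
  Finsupp.equivMapDomain (Equiv.subRight (1 : Fin (n + 1))) ν

/-- The domain `𝒰_θ : |pq/t| θ^{-n+1} < |x_j/x_i| < |t/(pq)| θ^{n-1}` (multiplicative form). -/
def UDom (n : ℕ) (q t : ℂ) (θ : ℝ) (p : ℂ) (x : Fin (n + 1) → ℂ) : Prop :=
  (∀ i, x i ≠ 0) ∧ ∀ i j : Fin (n + 1), i < j →
    ‖p * q‖ < ‖x j / x i‖ * ‖t‖ * θ ^ n ∧
      ‖x j / x i‖ * ‖p * q‖ < ‖t‖ * θ ^ n

/-!
The polynomial `d_λ` has the roots `(t^{n-1-i} q^{λ_i})⁻¹`, so it determines the set of spectral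
values `t^{n-1-i} q^{λ_i}`. If no `t^k` with `1 ≤ k ≤ n - 1` lies in `q^ℤ` then, as `|q| < 1` makes
`l ↦ q^l` injective, a spectral value determines both its position `i` and `λ_i`.
Conversely, if `t^k = q^l`, then `(l + 1) e_k` and `e_0 + l e_k` have the same spectral values.
-/

open Polynomial

lemma zpow_injective_of_norm_lt_one {K : Type*} [NormedDivisionRing K] {q : K} (hq0 : q ≠ 0)
    (hq1 : ‖q‖ < 1) : Function.Injective (q ^ · : ℤ → K) := fun a b h =>
  zpow_right_injective₀ (norm_pos_iff.mpr hq0) hq1.ne <| by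
    simpa only [norm_zpow] using congrArg norm h

lemma exists_eq_of_prod_one_sub_C_mul_X_eq {K ι : Type*} [Field K] [Fintype ι] {c d : ι → K}
    (hd : ∀ j, d j ≠ 0) (h : ∏ i, (1 - C (c i) * X) = ∏ i, (1 - C (d i) * X)) (j : ι) :
    ∃ i, c i = d j := by
  have hroot : (∏ i, (1 - C (d i) * X)).eval (d j)⁻¹ = 0 := by
    rw [eval_prod]
    exact Finset.prod_eq_zero (Finset.mem_univ j) (by simp [mul_inv_cancel₀ (hd j)])
  rw [← h, eval_prod, Finset.prod_eq_zero_iff] at hroot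
  obtain ⟨i, -, hi⟩ := hroot
  simp only [eval_sub, eval_one, eval_mul, eval_C, eval_X, sub_eq_zero] at hi
  exact ⟨i, (mul_inv_eq_one₀ (hd j)).mp hi.symm⟩

section specVec

variable {n : ℕ} {q t : ℂ}

lemma specVec_ne_zero (hq0 : q ≠ 0) (ht : t ≠ 0) (lam : Fin n → ℤ) (i : Fin n) :
    specVec q t lam i ≠ 0 :=
  mul_ne_zero (pow_ne_zero _ ht) (zpow_ne_zero _ hq0)

lemma pow_sub_eq_zpow_sub_of_specVec_eq (hq0 : q ≠ 0) (ht : t ≠ 0) {lam mu : Fin n → ℤ}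
    {i j : Fin n} (hij : i ≤ j) (h : specVec q t lam i = specVec q t mu j) :
    t ^ ((j : ℕ) - i) = q ^ (mu j - lam i) := by
  have hsplit : n - 1 - (i : ℕ) = (n - 1 - j) + (j - i) := by omega
  rw [specVec, specVec, hsplit, pow_add, mul_assoc] at h
  rw [zpow_sub₀ hq0, eq_div_iff (zpow_ne_zero _ hq0)]
  exact mul_left_cancel₀ (pow_ne_zero _ ht) h

lemma eq_of_specVec_eq (hq0 : q ≠ 0) (hq1 : ‖q‖ < 1) (ht : t ≠ 0)
    (hk : ∀ k ∈ Finset.Icc 1 (n - 1), ∀ l : ℤ, t ^ k ≠ q ^ l) {lam mu : Fin n → ℤ}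
    {i j : Fin n} (h : specVec q t lam i = specVec q t mu j) : i = j ∧ lam i = mu j := by
  rcases lt_trichotomy i j with hij | rfl | hij
  · exact absurd (pow_sub_eq_zpow_sub_of_specVec_eq hq0 ht hij.le h)
      (hk _ (Finset.mem_Icc.mpr ⟨by omega, by omega⟩) _)
  · have h1 := pow_sub_eq_zpow_sub_of_specVec_eq hq0 ht le_rfl h
    have h0 : mu i - lam i = 0 := zpow_injective_of_norm_lt_one hq0 hq1 (by simpa using h1.symm)
    exact ⟨rfl, by omega⟩
  · exact absurd (pow_sub_eq_zpow_sub_of_specVec_eq hq0 ht hij.le h.symm)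
      (hk _ (Finset.mem_Icc.mpr ⟨by omega, by omega⟩) _)

lemma eq_of_dPoly_eq (hq0 : q ≠ 0) (hq1 : ‖q‖ < 1) (ht : t ≠ 0)
    (hk : ∀ k ∈ Finset.Icc 1 (n - 1), ∀ l : ℤ, t ^ k ≠ q ^ l) {lam mu : Fin n → ℤ}
    (h : dPoly q t lam = dPoly q t mu) : lam = mu := by
  funext j
  obtain ⟨i, hi⟩ := exists_eq_of_prod_one_sub_C_mul_X_eq (specVec_ne_zero hq0 ht mu) h j
  obtain ⟨rfl, hlam⟩ := eq_of_specVec_eq hq0 hq1 ht hk hi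
  exact hlam

/-- The two spectral vectors differ by swapping positions `0` and `k`. -/
lemma dPoly_single_eq_of_pow_eq_zpow (hq0 : q ≠ 0) {k : ℕ} (hk0 : 0 < k) (hk : k < n) {l : ℤ}
    (h : t ^ k = q ^ l) :
    dPoly q t (Pi.single ⟨k, hk⟩ (l + 1)) =
      dPoly q t (Pi.single ⟨0, by omega⟩ 1 + Pi.single ⟨k, hk⟩ l) := by
  set i₀ : Fin n := ⟨0, by omega⟩
  set iₖ : Fin n := ⟨k, hk⟩
  have hne : iₖ ≠ i₀ := Fin.ne_of_val_ne hk0.ne'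
  have htop : t ^ (n - 1) = t ^ (n - 1 - k) * q ^ l := by
    rw [← h, ← pow_add, Nat.sub_add_cancel (by omega)]
  refine Fintype.prod_equiv (Equiv.swap i₀ iₖ) _ _ fun j => ?_
  congr 2
  rcases eq_or_ne j i₀ with rfl | hj₀
  · rw [Equiv.swap_apply_left]
    simp [specVec, i₀, iₖ, hne, htop]
  rcases eq_or_ne j iₖ with rfl | hjₖ
  · rw [Equiv.swap_apply_right]
    simp [specVec, i₀, iₖ, hne, htop, zpow_add_one₀ hq0, mul_assoc]
  · rw [Equiv.swap_apply_of_ne_of_ne hj₀ hjₖ]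
    simp [specVec, hj₀, hjₖ]

end specVec

theorem statement9_general (n : ℕ) (q t : ℂ) (hq0 : q ≠ 0)
    (hq1 : ‖q‖ < 1) (ht : t ≠ 0) :
    (∀ lam mu : Fin n → ℤ, lam ≠ mu → dPoly q t lam ≠ dPoly q t mu) ↔
      (∀ k ∈ Finset.Icc 1 (n - 1), ∀ l : ℤ, t ^ k ≠ q ^ l) := by
  refine ⟨fun hsep k hk l h => ?_, fun hk lam mu hne h => hne (eq_of_dPoly_eq hq0 hq1 ht hk h)⟩
  obtain ⟨hk1, hkn⟩ := Finset.mem_Icc.mp hk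
  refine hsep _ _ (fun heq => ?_) (dPoly_single_eq_of_pow_eq_zpow hq0 hk1 (by omega) h)
  have h0 := congrFun heq ⟨0, by omega⟩
  simp only [Pi.add_apply, Pi.single_apply, Fin.ext_iff, if_true] at h0
  split_ifs at h0 <;> omega

/-- Lemma 4.1 (1): the polynomials `d_λ(u)` separate `ℤ^n`
if and only if `t^k ∉ q^ℤ` for `k = 1,…,n-1`. -/
theorem statement9 (n : ℕ) (hn : 2 ≤ n) (q t : ℂ) (hq0 : q ≠ 0)
    (hq1 : ‖q‖ < 1) (ht : t ≠ 0) :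
    (∀ lam mu : Fin n → ℤ, lam ≠ mu → dPoly q t lam ≠ dPoly q t mu) ↔
      (∀ k ∈ Finset.Icc 1 (n - 1), ∀ l : ℤ, t ^ k ≠ q ^ l) :=
  statement9_general n q t hq0 hq1 ht
end
end

section
/- Let q ∈ ℂ with 0 < |q| < 1 and suppose s = (s_1,…,s_n) ∈ (ℂ*)^n satisfies s_j/s_i ∉ q^{ℤ∖{0}} for 1 ≤ i < j ≤ n. Then there exists a countable set S ⊆ ℂ* such that, for every c ∈ ℂ* ∖ S, one has ∏_{j=1}^n (1 − c s_j q^{m_j}) ≠ ∏_{j=1}^n (1 − c s_j) for every nonzero m = (m_1,…,m_n) ∈ ℤ^n. -/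
open scoped BigOperators Classical
open MeasureTheory

noncomputable section

/-!
For `m ≠ 0` pick `j` with `m j ≠ 0`. The left-hand product, as a polynomial in `c`, vanishes at
`c = (s j q^{m j})⁻¹`, while the right-hand one does not: that would need `s i = s j q^{m j}` for
some `i`, which the separation hypothesis excludes for `i ≠ j` and `|q| < 1` excludes for `i = j`.
So the two sides differ as polynomials, and each `m` contributes only finitely many bad `c`.
-/

open Polynomial

theorem zpow_ne_one_of_norm_lt_one {𝕜 : Type*} [NormedDivisionRing 𝕜] {q : 𝕜} (hq : ‖q‖ < 1)
    {l : ℤ} (hl : l ≠ 0) : q ^ l ≠ 1 := by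
  intro h
  have : ‖q‖ ^ l = 1 := by rw [← norm_zpow, h, norm_one]
  exact hl ((zpow_eq_one_iff_right₀ (norm_nonneg q) hq.ne).mp this)

section ProdOneSub

variable {K ι : Type*} [Field K] [Fintype ι]

theorem eval_prod_one_sub_X_mul_C (a : ι → K) (c : K) :
    (∏ i, (1 - X * C (a i))).eval c = ∏ i, (1 - c * a i) := by
  simp only [eval_prod, eval_sub, eval_one, eval_mul, eval_X, eval_C]

theorem prod_one_sub_X_mul_C_ne {a b : ι → K} {j : ι} (hj : a j ≠ 0) (hb : ∀ i, b i ≠ a j) :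
    ∏ i, (1 - X * C (a i)) ≠ ∏ i, (1 - X * C (b i)) := by
  intro h
  have h' := congrArg (eval (a j)⁻¹) h
  rw [eval_prod_one_sub_X_mul_C, eval_prod_one_sub_X_mul_C] at h'
  have hzero : ∏ i, (1 - (a j)⁻¹ * a i) = 0 :=
    Finset.prod_eq_zero (Finset.mem_univ j) (by rw [inv_mul_cancel₀ hj, sub_self])
  refine Finset.prod_ne_zero_iff.mpr (fun i _ hi => hb i ?_) (h' ▸ hzero)
  rw [sub_eq_zero, eq_comm, inv_mul_eq_one₀ hj] at hi
  exact hi.symm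

theorem countable_setOf_exists_prod_one_sub_mul_eq {κ : Type*} [Countable κ]
    (a : κ → ι → K) (b : ι → K)
    (h : ∀ k, ∏ i, (1 - X * C (a k i)) ≠ ∏ i, (1 - X * C (b i))) :
    {c | ∃ k, ∏ i, (1 - c * a k i) = ∏ i, (1 - c * b i)}.Countable := by
  refine Set.Countable.mono ?_ (Set.countable_iUnion fun k =>
    (finite_setOfPred_isRoot (sub_ne_zero.mpr (h k))).countable)
  rintro c ⟨k, hk⟩
  exact Set.mem_iUnion.mpr ⟨k, by
    simp only [Set.mem_ofPred_eq, IsRoot, eval_sub, eval_prod_one_sub_X_mul_C, hk, sub_self]⟩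

end ProdOneSub

theorem ne_mul_zpow_of_div_ne_zpow {n : ℕ} {q : ℂ} (hq1 : ‖q‖ < 1) {s : Fin n → ℂ}
    (hs : ∀ i, s i ≠ 0) (hsep : ∀ i j : Fin n, i < j → ∀ l : ℤ, l ≠ 0 → s j / s i ≠ q ^ l)
    {l : ℤ} (hl : l ≠ 0) (i j : Fin n) : s i ≠ s j * q ^ l := by
  intro h
  rcases lt_trichotomy i j with hij | rfl | hji
  · exact hsep i j hij (-l) (neg_ne_zero.mpr hl) (by rw [h, zpow_neg, div_mul_cancel_left₀ (hs j)])
  · exact zpow_ne_one_of_norm_lt_one hq1 hl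
      (mul_left_cancel₀ (hs i) (by rw [mul_one, ← h]))
  · exact hsep j i hji l hl (by rw [h, mul_div_cancel_left₀ _ (hs j)])

/-- Lemma 4.3: under the condition `s_j/s_i ∉ q^{ℤ∖{0}}`, there is a
countable set `S ⊆ ℂ*` such that for `c ∈ ℂ* ∖ S` one has
`∏_j (1 - c s_j q^{m_j}) ≠ ∏_j (1 - c s_j)` for every nonzero `m ∈ ℤ^n`. -/
theorem statement12 (n : ℕ) (q : ℂ) (hq0 : q ≠ 0) (hq1 : ‖q‖ < 1)
    (s : Fin n → ℂ) (hs : ∀ i, s i ≠ 0)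
    (hsep : ∀ i j : Fin n, i < j → ∀ l : ℤ, l ≠ 0 → s j / s i ≠ q ^ l) :
    ∃ S : Set ℂ, S.Countable ∧ (∀ a ∈ S, a ≠ 0) ∧
      ∀ c : ℂ, c ≠ 0 → c ∉ S → ∀ m : Fin n → ℤ, m ≠ 0 →
        (∏ j, (1 - c * s j * q ^ m j)) ≠ ∏ j, (1 - c * s j) := by
  have hpoly : ∀ m : {m : Fin n → ℤ // m ≠ 0},
      ∏ i, (1 - X * C (s i * q ^ m.1 i)) ≠ ∏ i, (1 - X * C (s i)) := by
    rintro ⟨m, hm⟩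
    obtain ⟨j, hj⟩ := Function.ne_iff.mp hm
    exact prod_one_sub_X_mul_C_ne (j := j) (mul_ne_zero (hs j) (zpow_ne_zero _ hq0))
      fun i => ne_mul_zpow_of_div_ne_zpow hq1 hs hsep hj i j
  refine ⟨{c | c ≠ 0 ∧ ∃ m : Fin n → ℤ, m ≠ 0 ∧
      ∏ j, (1 - c * s j * q ^ m j) = ∏ j, (1 - c * s j)}, ?_, fun _ ha => ha.1,
    fun c hc hcS m hm heq => hcS ⟨hc, m, hm, heq⟩⟩
  refine (countable_setOf_exists_prod_one_sub_mul_eq _ _ hpoly).mono ?_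
  rintro c ⟨-, m, hm, heq⟩
  exact ⟨⟨m, hm⟩, by simpa only [mul_assoc] using heq⟩
end
end

section
/- Let n ≥ 1, s ∈ (ℂ*)^n, u ∈ ℂ, q ∈ ℂ with 0 < |q| < 1, and r ∈ (0,1), M_r > 0. Suppose the complex numbers b^I_β, indexed by subsets I ⊆ {1,…,n} and elements β of Q^af_+, satisfy the Cauchy estimate |b^I_β| ≤ M_r / r^{ht(β)}. Define b_β(ξ;u) = Σ_{I⊆{1,…,n}} (−u)^{|I|} b^I_β (∏_{i∈I} s_i ξ_i) for ξ = (ξ_1,…,ξ_n) ∈ (ℂ*)^n. Then for every β ∈ Q^af_+ with β > 0 and every ν ∈ Q^af_+: |b_β(q^{−ν};u)| ≤ (M_r / (r^{ht(β)} |q|^{d(ν)})) ∏_{j=1}^n (1 + |u| |s_j|), where q^{−ν} = (q^{−⟨ε_1,ν⟩}, …, q^{−⟨ε_n,ν⟩}). -/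
open scoped BigOperators Classical
open MeasureTheory

noncomputable section

theorem prod_zpow_eq_zpow_sum {ι G₀ : Type*} [CommGroupWithZero G₀] {a : G₀} (ha : a ≠ 0)
    (s : Finset ι) (f : ι → ℤ) : ∏ i ∈ s, a ^ f i = a ^ ∑ i ∈ s, f i := by
  induction s using Finset.induction with
  | empty => simp
  | insert x s hx ih => rw [Finset.prod_insert hx, Finset.sum_insert hx, zpow_add₀ ha, ih]

theorem norm_sum_powerset_mul_prod_le {ι R : Type*} [NormedCommRing R] [NormOneClass R]
    (s : Finset ι) (c : Finset ι → R) (x : ι → R) {K : ℝ} (hc : ∀ I ∈ s.powerset, ‖c I‖ ≤ K) :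
    ‖∑ I ∈ s.powerset, c I * ∏ i ∈ I, x i‖ ≤ K * ∏ j ∈ s, (1 + ‖x j‖) := by
  have hK : 0 ≤ K := (norm_nonneg _).trans (hc ∅ (Finset.empty_mem_powerset s))
  calc ‖∑ I ∈ s.powerset, c I * ∏ i ∈ I, x i‖
      ≤ ∑ I ∈ s.powerset, K * ∏ i ∈ I, ‖x i‖ := by
        refine (norm_sum_le _ _).trans (Finset.sum_le_sum fun I hI => ?_)
        exact (norm_mul_le _ _).trans
          (mul_le_mul (hc I hI) (Finset.norm_prod_le _ _) (norm_nonneg _) hK)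
    _ = K * ∏ j ∈ s, (1 + ‖x j‖) := by rw [← Finset.mul_sum, Finset.prod_one_add]

theorem norm_prod_zpow_neg_le {ι 𝕜 : Type*} [Fintype ι] [NormedField 𝕜] {q : 𝕜} (hq0 : q ≠ 0)
    (hq1 : ‖q‖ ≤ 1) (I : Finset ι) (f : ι → ℤ) :
    ‖∏ i ∈ I, q ^ (-f i)‖ ≤ (‖q‖ ^ ∑ i, (f i).toNat)⁻¹ := by
  have hsum : ∑ i ∈ I, f i ≤ ∑ i, ((f i).toNat : ℤ) :=
    (Finset.sum_le_sum fun i _ => Int.self_le_toNat (f i)).trans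
      (Finset.sum_le_sum_of_subset_of_nonneg I.subset_univ fun i _ _ => Int.natCast_nonneg _)
  rw [prod_zpow_eq_zpow_sum hq0, norm_zpow, ← zpow_natCast, ← zpow_neg, Nat.cast_sum,
    Finset.sum_neg_distrib]
  exact zpow_le_zpow_right_of_le_one₀ (norm_pos_iff.mpr hq0) hq1 (neg_le_neg hsum)

theorem statement14_general (n : ℕ) (s : Fin (n + 1) → ℂ) (u q : ℂ) (hq0 : q ≠ 0)
    (hq1 : ‖q‖ < 1) (r M : ℝ)
    (b : Finset (Fin (n + 1)) → (Fin (n + 1) → ℕ) → ℂ)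
    (hb : ∀ (I : Finset (Fin (n + 1))) (β : Fin (n + 1) → ℕ),
      ‖b I β‖ ≤ M / r ^ (∑ j, β j))
    (β ν : Fin (n + 1) → ℕ) :
    ‖∑ I ∈ Finset.univ.powerset,
        (-u) ^ I.card * b I β * ∏ i ∈ I, s i * q ^ (-pairEpsF ν i)‖ ≤
      M / (r ^ (∑ j, β j) * ‖q‖ ^ dIndF ν) *
        ∏ j, (1 + ‖u‖ * ‖s j‖) := by
  have hterm : ∀ I : Finset (Fin (n + 1)),
      (-u) ^ I.card * b I β * ∏ i ∈ I, s i * q ^ (-pairEpsF ν i) =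
        (b I β * ∏ i ∈ I, q ^ (-pairEpsF ν i)) * ∏ i ∈ I, (-u * s i) := by
    intro I
    rw [Finset.prod_mul_distrib, Finset.prod_mul_distrib, Finset.prod_const]
    ring
  have hcoeff : ∀ I ∈ (Finset.univ : Finset (Fin (n + 1))).powerset,
      ‖b I β * ∏ i ∈ I, q ^ (-pairEpsF ν i)‖ ≤ M / r ^ (∑ j, β j) * (‖q‖ ^ dIndF ν)⁻¹ := by
    intro I _
    rw [norm_mul]
    exact mul_le_mul (hb I β) (norm_prod_zpow_neg_le hq0 hq1.le I _) (norm_nonneg _)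
      ((norm_nonneg _).trans (hb I β))
  simp_rw [hterm]
  convert norm_sum_powerset_mul_prod_le _ _ _ hcoeff using 1
  rw [div_mul_eq_div_div, div_eq_mul_inv (M / _)]
  simp only [norm_mul, norm_neg]

/-- Lemma 5.3: the Cauchy estimate for the symbols
`b_β(q^{-ν};u)` of the modified elliptic Ruijsenaars operators. -/
theorem statement14 (n : ℕ) (s : Fin (n + 1) → ℂ) (u q : ℂ) (hq0 : q ≠ 0)
    (hq1 : ‖q‖ < 1) (r M : ℝ) (hr0 : 0 < r) (hr1 : r < 1) (hM : 0 < M)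
    (b : Finset (Fin (n + 1)) → (Fin (n + 1) → ℕ) → ℂ)
    (hb : ∀ (I : Finset (Fin (n + 1))) (β : Fin (n + 1) → ℕ),
      ‖b I β‖ ≤ M / r ^ (∑ j, β j))
    (β ν : Fin (n + 1) → ℕ) (hβ : β ≠ 0) :
    ‖∑ I ∈ Finset.univ.powerset,
        (-u) ^ I.card * b I β * ∏ i ∈ I, s i * q ^ (-pairEpsF ν i)‖ ≤
      M / (r ^ (∑ j, β j) * ‖q‖ ^ dIndF ν) *
        ∏ j, (1 + ‖u‖ * ‖s j‖) :=
  statement14_general n s u q hq0 hq1 r M b hb β ν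
end
end
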